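/- For every z > 0 and every t > 0, the convolution identity ∫_0^t g₋(x; z) · g₊(t - x; 0) dx = g₊(t; z) holds; i.e., the sum of an independent generalized inverse Gaussian random variable with parameters (1, z², -1/2) and a chi-square random variable with one degree of freedom has generalized inverse Gaussian distribution with parameters (1, z², +1/2). -/

import Mathlib

/-!
Substitute `x = z²t / (z² + t u²)`, which maps `u ∈ (0, ∞)` decreasingly onto `x ∈ (0, t)`.
Then `t - x = t²u² / (z² + t u²)`, the two exponents combine to `-z²/(2t) - t/2 - u²/2`, and
all powers of `z² + t u²` cancel against the Jacobian, so the convolution integral becomes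
`e^z e^{-z²/(2t) - t/2} / (π √t)` times the half-line Gaussian integral `∫₀^∞ e^{-u²/2} du = √(π/2)`.
-/

/-- The generalized inverse Gaussian density with parameters `(ψ, χ, λ) = (1, z², -1/2)`:
`g₋(x; z) = (z e^z / √(2π)) x^{-3/2} exp(-z²/(2x) - x/2)`. -/
noncomputable def gigMinus (z x : ℝ) : ℝ :=
  z * Real.exp z / Real.sqrt (2 * Real.pi) * x ^ (-(3 : ℝ) / 2) *
    Real.exp (-z ^ 2 / (2 * x) - x / 2)

/-- The generalized inverse Gaussian density with parameters `(ψ, χ, λ) = (1, z², +1/2)`: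
`g₊(x; z) = (e^z / √(2π)) x^{-1/2} exp(-z²/(2x) - x/2)`.  At `z = 0` this is the chi-square
density with one degree of freedom. -/
noncomputable def gigPlus (z x : ℝ) : ℝ :=
  Real.exp z / Real.sqrt (2 * Real.pi) * x ^ (-(1 : ℝ) / 2) *
    Real.exp (-z ^ 2 / (2 * x) - x / 2)

lemma Real.rpow_neg_three_halves {a : ℝ} (ha : 0 < a) : a ^ (-(3 : ℝ) / 2) = (a * √a)⁻¹ := by
  rw [show -(3 : ℝ) / 2 = -(1 + 1 / 2) by norm_num, Real.rpow_neg ha.le, Real.rpow_add ha,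
    Real.rpow_one, ← Real.sqrt_eq_rpow]

lemma Real.rpow_neg_one_half {a : ℝ} (ha : 0 < a) : a ^ (-(1 : ℝ) / 2) = (√a)⁻¹ := by
  rw [show -(1 : ℝ) / 2 = -(1 / 2) by norm_num, Real.rpow_neg ha.le, ← Real.sqrt_eq_rpow]

noncomputable def gaussSubst (c t u : ℝ) : ℝ := c * t / (c + t * u ^ 2)

section GaussSubst

variable {c t : ℝ}

lemma hasDerivAt_gaussSubst {u : ℝ} (hu : c + t * u ^ 2 ≠ 0) :
    HasDerivAt (gaussSubst c t) (-(2 * c * t ^ 2 * u) / (c + t * u ^ 2) ^ 2) u := by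
  have h := (hasDerivAt_const u (c * t)).div (((hasDerivAt_pow 2 u).const_mul t).const_add c) hu
  refine h.congr_deriv ?_
  field_simp
  ring

lemma sub_gaussSubst {u : ℝ} (hu : c + t * u ^ 2 ≠ 0) :
    t - gaussSubst c t u = t ^ 2 * u ^ 2 / (c + t * u ^ 2) := by
  unfold gaussSubst
  field_simp
  ring

variable (hc : 0 < c) (ht : 0 < t)
include hc ht

lemma gaussSubst_pos (u : ℝ) : 0 < gaussSubst c t u := by
  unfold gaussSubst; positivity

lemma strictAntiOn_gaussSubst : StrictAntiOn (gaussSubst c t) (Set.Ioi 0) := by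
  intro a ha b _ hab
  have hab2 : a ^ 2 < b ^ 2 := pow_lt_pow_left₀ hab ha.le two_ne_zero
  exact div_lt_div_of_pos_left (by positivity) (by positivity) (by nlinarith)

lemma gaussSubst_image_Ioi : gaussSubst c t '' Set.Ioi 0 = Set.Ioo 0 t := by
  ext x
  simp only [Set.mem_image, Set.mem_Ioi, Set.mem_Ioo]
  constructor
  · rintro ⟨u, hu, rfl⟩
    refine ⟨gaussSubst_pos hc ht u, ?_⟩
    rw [← sub_pos, sub_gaussSubst (by positivity)]
    positivity
  · rintro ⟨hx0, hxt⟩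
    have htx : 0 < t - x := by linarith
    refine ⟨√(c * (t - x) / (t * x)), Real.sqrt_pos.mpr (by positivity), ?_⟩
    rw [gaussSubst, Real.sq_sqrt (by positivity)]
    field_simp
    ring

end GaussSubst

section Convolution

variable {z t : ℝ} (hz : 0 < z) (ht : 0 < t)
include hz ht

lemma rpow_gaussSubst {u : ℝ} :
    gaussSubst (z ^ 2) t u ^ (-(3 : ℝ) / 2) =
      (z ^ 2 + t * u ^ 2) * √(z ^ 2 + t * u ^ 2) / (z ^ 3 * t * √t) := by
  have hD : 0 < z ^ 2 + t * u ^ 2 := by positivity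
  have hsqrt : √(gaussSubst (z ^ 2) t u) = z * √t / √(z ^ 2 + t * u ^ 2) := by
    rw [gaussSubst, Real.sqrt_div (by positivity), Real.sqrt_mul (sq_nonneg z),
      Real.sqrt_sq hz.le]
  rw [Real.rpow_neg_three_halves (gaussSubst_pos (by positivity) ht u), hsqrt, gaussSubst,
    ← Real.mul_self_sqrt hD.le, ← Real.mul_self_sqrt ht.le]
  have := Real.sqrt_pos.mpr hD
  have := Real.sqrt_pos.mpr ht
  field_simp

lemma rpow_sub_gaussSubst {u : ℝ} (hu : 0 < u) :
    (t - gaussSubst (z ^ 2) t u) ^ (-(1 : ℝ) / 2) = √(z ^ 2 + t * u ^ 2) / (t * u) := by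
  rw [sub_gaussSubst (by positivity),
    Real.rpow_neg_one_half (by positivity), Real.sqrt_div (by positivity),
    show t ^ 2 * u ^ 2 = (t * u) ^ 2 by ring, Real.sqrt_sq (by positivity), inv_div]

lemma gaussSubst_exponent (u : ℝ) :
    (-z ^ 2 / (2 * gaussSubst (z ^ 2) t u) - gaussSubst (z ^ 2) t u / 2) +
        (-(0 : ℝ) ^ 2 / (2 * (t - gaussSubst (z ^ 2) t u)) - (t - gaussSubst (z ^ 2) t u) / 2) =
      (-z ^ 2 / (2 * t) - t / 2) + -(1 / 2 : ℝ) * u ^ 2 := by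
  have : 0 < z ^ 2 + t * u ^ 2 := by positivity
  rw [sub_gaussSubst (by positivity), gaussSubst]
  simp only [ne_eq, OfNat.ofNat_ne_zero, not_false_eq_true, zero_pow, neg_zero, zero_div]
  field_simp
  ring

lemma gigConvolution_integrand_gaussSubst {u : ℝ} (hu : 0 < u) :
    |-(2 * z ^ 2 * t ^ 2 * u) / (z ^ 2 + t * u ^ 2) ^ 2| •
        (gigMinus z (gaussSubst (z ^ 2) t u) * gigPlus 0 (t - gaussSubst (z ^ 2) t u)) =
      Real.exp z * Real.exp (-z ^ 2 / (2 * t) - t / 2) / (Real.pi * √t) *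
        Real.exp (-(1 / 2 : ℝ) * u ^ 2) := by
  have hD : 0 < z ^ 2 + t * u ^ 2 := by positivity
  have hP := Real.mul_self_sqrt (by positivity : (0 : ℝ) ≤ 2 * Real.pi)
  have := Real.sqrt_pos.mpr hD
  have := Real.sqrt_pos.mpr ht
  have := Real.sqrt_pos.mpr (by positivity : (0 : ℝ) < 2 * Real.pi)
  have hexp := congrArg Real.exp (gaussSubst_exponent hz ht u)
  rw [Real.exp_add, Real.exp_add] at hexp
  simp only [gigMinus, gigPlus, smul_eq_mul, Real.exp_zero]
  rw [abs_div, abs_neg, abs_of_pos (by positivity), abs_of_pos (by positivity),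
    rpow_gaussSubst hz ht, rpow_sub_gaussSubst hz ht hu]
  calc _ = 2 * z ^ 2 * t ^ 2 * u / (z ^ 2 + t * u ^ 2) ^ 2 * (z * Real.exp z) *
        ((z ^ 2 + t * u ^ 2) * √(z ^ 2 + t * u ^ 2) / (z ^ 3 * t * √t)) *
        (√(z ^ 2 + t * u ^ 2) / (t * u)) / (√(2 * Real.pi) * √(2 * Real.pi)) *
        (Real.exp (-z ^ 2 / (2 * t) - t / 2) * Real.exp (-(1 / 2 : ℝ) * u ^ 2)) := by
        rw [← hexp]; field_simp
    _ = _ := by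
      rw [hP]
      field_simp
      rw [Real.sq_sqrt hD.le]

end Convolution

theorem stmt_3 (z t : ℝ) (hz : 0 < z) (ht : 0 < t) :
    ∫ x in (0 : ℝ)..t, gigMinus z x * gigPlus 0 (t - x) = gigPlus z t := by
  have hc : 0 < z ^ 2 := by positivity
  rw [intervalIntegral.integral_of_le ht.le, MeasureTheory.integral_Ioc_eq_integral_Ioo,
    ← gaussSubst_image_Ioi hc ht,
    MeasureTheory.integral_image_eq_integral_abs_deriv_smul measurableSet_Ioi
      (fun u _ => (hasDerivAt_gaussSubst (by positivity)).hasDerivWithinAt)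
      (strictAntiOn_gaussSubst hc ht).injOn,
    MeasureTheory.setIntegral_congr_fun measurableSet_Ioi
      (fun u hu => gigConvolution_integrand_gaussSubst hz ht hu),
    MeasureTheory.integral_const_mul, integral_gaussian_Ioi, gigPlus, Real.rpow_neg_one_half ht,
    show Real.pi / (1 / 2) = 2 * Real.pi by ring]
  have hP := Real.mul_self_sqrt (by positivity : (0 : ℝ) ≤ 2 * Real.pi)
  have := Real.sqrt_pos.mpr ht
  have := Real.sqrt_pos.mpr (by positivity : (0 : ℝ) < 2 * Real.pi)
  rw [show Real.pi = √(2 * Real.pi) * √(2 * Real.pi) / 2 by linarith]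
  field_simp
  rw [Real.sq_sqrt (by positivity)]
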